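/- Let ψ : V → {1,2,3} be a map that is not a three-coloring of G (i.e., there is an edge {u,v} ∈ E with ψ(u) = ψ(v)), let 𝒱 = {(v, ψ(v)) : v ∈ V}, and let S be the submatrix of M(G) with columns indexed by 𝒱. Then for every matrix A with rows indexed by 𝒱 and columns indexed by (V × {1,2,3}) ⊔ E one has ‖M(G) − SA‖² ≥ m t² + 4 n (t³/(1 + n t⁶))² + (m + 2) (t⁵/(1 + n t⁶))². -/

import Mathlib

open Matrix

/-- The Frobenius norm of a real matrix: the square root of the sum of squares of entries. -/
noncomputable def frob {α β : Type*} [Fintype α] [Fintype β] (X : Matrix α β ℝ) : ℝ :=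
  Real.sqrt (∑ i, ∑ j, X i j ^ 2)

/-- The matrix `M(G)` of the reduction: rows indexed by `V ⊕ {1,2,3} ⊕ {ε}`,
columns indexed by `(V × {1,2,3}) ⊕ E`. -/
def MG {V : Type*} [Fintype V] [DecidableEq V] (G : SimpleGraph V) [DecidableRel G.Adj]
    (t : ℝ) : Matrix (V ⊕ Fin 3 ⊕ Unit) ((V × Fin 3) ⊕ G.edgeSet) ℝ :=
  fun r c =>
    match r, c with
    | Sum.inl u, Sum.inl (v, _) => if u = v then (1 : ℝ) else 0
    | Sum.inl u, Sum.inr e => if u ∈ (e : Sym2 V) then t ^ 2 else 0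
    | Sum.inr (Sum.inl i), Sum.inl (_, j) => if i = j then t ^ 3 else 0
    | Sum.inr (Sum.inl _), Sum.inr _ => t ^ 5
    | Sum.inr (Sum.inr _), Sum.inl _ => 0
    | Sum.inr (Sum.inr _), Sum.inr _ => t

/-!
Write `S = [1; B]` in block form, vertex rows on top. The rows `z_k` of `[-B | 1]`, one for each
colour and one for `ε`, are orthogonal to every column of `S` and have pairwise disjoint supports,
so by Bessel's inequality every column `c` of `M(G) - S A`, whatever `A` is, has squared norm at
least `∑ₖ ⟨z_k, M(G)_c⟩² / ‖z_k‖²`. Here `‖z_ε‖ = 1` and `‖z_k‖² ≤ 1 + n t⁶` otherwise. The colour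
rows pick up `4 t⁶` from the three columns of each vertex and `t¹⁰` from each edge column, but
`3 t¹⁰` from a monochromatic edge; the row `ε` picks up `t²` from each edge column.
-/

open Finset

/-- Bessel's inequality for the rows of `Z`, which are orthogonal because row `k` is supported on
the fibre `q ⁻¹' {k}`. -/
theorem sum_sq_mulVec_div_le_sum_sq {ι κ : Type*} [Fintype ι] [Fintype κ] [DecidableEq κ]
    (q : ι → κ) (Z : Matrix κ ι ℝ) (hZ : ∀ k r, q r ≠ k → Z k r = 0) (y : ι → ℝ) :
    ∑ k, (Z *ᵥ y) k ^ 2 / ∑ r, Z k r ^ 2 ≤ ∑ r, y r ^ 2 := by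
  have hfiber (k : κ) : (Z *ᵥ y) k ^ 2 / ∑ r, Z k r ^ 2 ≤ ∑ r with q r = k, y r ^ 2 := by
    have hsupp (f : ι → ℝ) (hf : ∀ r, q r ≠ k → f r = 0) :
        ∑ r with q r = k, f r = ∑ r, f r :=
      sum_filter_of_ne fun r _ hr => not_not.1 (mt (hf r) hr)
    have hcs := sum_mul_sq_le_sq_mul_sq {r | q r = k} (Z k) y
    rw [hsupp _ fun r hr => by simp [hZ k r hr], hsupp _ fun r hr => by simp [hZ k r hr]] at hcs
    exact div_le_of_le_mul₀ (sum_nonneg fun _ _ => sq_nonneg _)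
      (sum_nonneg fun _ _ => sq_nonneg _) (by rw [mulVec, dotProduct]; linarith)
  calc _ ≤ ∑ k, ∑ r with q r = k, y r ^ 2 := sum_le_sum fun k _ => hfiber k
    _ = _ := sum_fiberwise _ _ _

section ColumnSpaceComplement

variable {V W C : Type*} [Fintype V] [Fintype W] [DecidableEq W]

theorem fromCols_neg_one_mul_apply (B : Matrix W V ℝ) (M : Matrix (V ⊕ W) C ℝ) (k : W) (c : C) :
    (fromCols (-B) (1 : Matrix W W ℝ) * M) k c =
      M (Sum.inr k) c - ∑ v, B k v * M (Sum.inl v) c := by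
  simp [mul_apply, Fintype.sum_sum_type, one_apply, sub_eq_neg_add]

variable [DecidableEq V]

theorem fromCols_neg_one_mul_fromRows_one (B : Matrix W V ℝ) :
    fromCols (-B) (1 : Matrix W W ℝ) * fromRows (1 : Matrix V V ℝ) B = 0 := by
  simp [fromCols_mul_fromRows]

theorem sum_sq_div_le_frob_sq_sub_fromRows_mul [Fintype C] (p : V → W) (B : Matrix W V ℝ)
    (hB : ∀ k v, p v ≠ k → B k v = 0) (M : Matrix (V ⊕ W) C ℝ) (A : Matrix V C ℝ) :
    ∑ c, ∑ k, (fromCols (-B) (1 : Matrix W W ℝ) * M) k c ^ 2 / (∑ v, B k v ^ 2 + 1) ≤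
      frob (M - fromRows (1 : Matrix V V ℝ) B * A) ^ 2 := by
  set Z := fromCols (-B) (1 : Matrix W W ℝ)
  set R := M - fromRows (1 : Matrix V V ℝ) B * A
  have hZR : Z * R = Z * M := by
    rw [Matrix.mul_sub, ← Matrix.mul_assoc, fromCols_neg_one_mul_fromRows_one, Matrix.zero_mul,
      sub_zero]
  have hnorm (k : W) : ∑ r, Z k r ^ 2 = ∑ v, B k v ^ 2 + 1 := by
    simp [Z, Fintype.sum_sum_type, one_apply]
  have hsupp (k : W) (r : V ⊕ W) (hr : Sum.elim p id r ≠ k) : Z k r = 0 := by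
    rcases r with v | l
    · simp [Z, hB k v hr]
    · simp only [Sum.elim_inr, id] at hr
      simp [Z, one_apply, Ne.symm hr]
  rw [frob, Real.sq_sqrt (by positivity), ← hZR]
  refine (sum_le_sum fun c _ => ?_).trans_eq sum_comm
  have hcol := sum_sq_mulVec_div_le_sum_sq _ Z hsupp fun r => R r c
  simp only [hnorm] at hcol
  exact hcol

end ColumnSpaceComplement

theorem div_sq_le_sq_div (a : ℝ) {K : ℝ} (hK : 1 ≤ K) : (a / K) ^ 2 ≤ a ^ 2 / K := by
  rw [div_pow]
  exact div_le_div_of_nonneg_left (sq_nonneg a) (by linarith) (le_self_pow₀ hK two_ne_zero)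

theorem sum_sq_ite_sub_ite (a : Fin 3) (x : ℝ) :
    ∑ j : Fin 3, ∑ i : Fin 3, ((if i = j then x else 0) - (if i = a then x else 0)) ^ 2 =
      4 * x ^ 2 := by
  fin_cases a <;> simp [Fin.sum_univ_three] <;> ring

theorem sum_sq_sub_ite_sub_ite (a b : Fin 3) (x : ℝ) :
    ∑ i : Fin 3, (x - (if i = a then x else 0) - (if i = b then x else 0)) ^ 2 =
      if a = b then 3 * x ^ 2 else x ^ 2 := by
  fin_cases a <;> fin_cases b <;> simp [Fin.sum_univ_three] <;> ring

section ReductionMatrix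

variable {V : Type*} [Fintype V] [DecidableEq V] (G : SimpleGraph V) [DecidableRel G.Adj]
  (t : ℝ) (ψ : V → Fin 3)

def selectedLowerRows : Matrix (Fin 3 ⊕ Unit) V ℝ :=
  of fun k v => MG G t (Sum.inr k) (Sum.inl (v, ψ v))

theorem of_MG_selected_eq_fromRows :
    (of fun r v => MG G t r (Sum.inl (v, ψ v))) = fromRows 1 (selectedLowerRows G t ψ) := by
  ext (u | k) v
  · simp [MG, one_apply]
  · rfl

theorem selectedLowerRows_eq_zero {k : Fin 3 ⊕ Unit} {v : V} (h : Sum.inl (ψ v) ≠ k) :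
    selectedLowerRows G t ψ k v = 0 := by
  rcases k with i | u
  · have hi : i ≠ ψ v := fun hi => h (hi ▸ rfl)
    simp [selectedLowerRows, MG, hi]
  · simp [selectedLowerRows, MG]

theorem sum_sq_selectedLowerRows_add_one_le (i : Fin 3) :
    ∑ v, selectedLowerRows G t ψ (Sum.inl i) v ^ 2 + 1 ≤ 1 + Fintype.card V * t ^ 6 := by
  have hentry (v : V) : selectedLowerRows G t ψ (Sum.inl i) v ^ 2 ≤ t ^ 6 := by
    simp only [selectedLowerRows, MG, of_apply]
    split_ifs <;> nlinarith [pow_two_nonneg (t ^ 3)]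
  have hsum := sum_le_sum fun v (_ : v ∈ univ) => hentry v
  simp only [sum_const, card_univ, nsmul_eq_mul] at hsum
  linarith

theorem sum_sq_selectedLowerRows_inr_add_one (u : Unit) :
    ∑ v, selectedLowerRows G t ψ (Sum.inr u) v ^ 2 + 1 = 1 := by
  simp [selectedLowerRows, MG]

/-- The inner products `⟨z_k, M(G)_c⟩` of the header. -/
def quotCoords : Matrix (Fin 3 ⊕ Unit) ((V × Fin 3) ⊕ G.edgeSet) ℝ :=
  fromCols (-selectedLowerRows G t ψ) (1 : Matrix (Fin 3 ⊕ Unit) (Fin 3 ⊕ Unit) ℝ) * MG G t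

theorem quotCoords_inr (u : Unit) (c : (V × Fin 3) ⊕ G.edgeSet) :
    quotCoords G t ψ (Sum.inr u) c = MG G t (Sum.inr (Sum.inr u)) c := by
  rw [quotCoords, fromCols_neg_one_mul_apply]
  simp [selectedLowerRows, MG]

theorem quotCoords_vertex (i j : Fin 3) (w : V) :
    quotCoords G t ψ (Sum.inl i) (Sum.inl (w, j)) =
      (if i = j then t ^ 3 else 0) - (if i = ψ w then t ^ 3 else 0) := by
  rw [quotCoords, fromCols_neg_one_mul_apply]
  simp [selectedLowerRows, MG]

theorem quotCoords_edge {u w : V} (h : G.Adj u w) (i : Fin 3) :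
    quotCoords G t ψ (Sum.inl i) (Sum.inr ⟨s(u, w), G.mem_edgeSet.2 h⟩) =
      t ^ 5 - (if i = ψ u then t ^ 5 else 0) - (if i = ψ w then t ^ 5 else 0) := by
  have hfilter : ({v | v ∈ s(u, w)} : Finset V) = {u, w} := by
    ext; simp
  rw [quotCoords, fromCols_neg_one_mul_apply]
  simp only [selectedLowerRows, MG, of_apply, mul_ite, mul_zero, ← sum_filter, hfilter,
    sum_pair h.ne]
  split_ifs <;> ring

theorem sum_sq_quotCoords_edge {u w : V} (h : G.Adj u w) :
    ∑ i, quotCoords G t ψ (Sum.inl i) (Sum.inr ⟨s(u, w), G.mem_edgeSet.2 h⟩) ^ 2 =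
      if ψ u = ψ w then 3 * t ^ 10 else t ^ 10 := by
  simp only [quotCoords_edge G t ψ h, sum_sq_sub_ite_sub_ite, ← pow_mul, Nat.reduceMul]

theorem sum_sq_quotCoords_div_le (c : (V × Fin 3) ⊕ G.edgeSet) :
    ∑ i, quotCoords G t ψ (Sum.inl i) c ^ 2 / (1 + Fintype.card V * t ^ 6) +
        MG G t (Sum.inr (Sum.inr ())) c ^ 2 ≤
      ∑ k, quotCoords G t ψ k c ^ 2 / (∑ v, selectedLowerRows G t ψ k v ^ 2 + 1) := by
  simp only [Fintype.sum_sum_type, Fintype.sum_unique, sum_sq_selectedLowerRows_inr_add_one,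
    div_one, quotCoords_inr]
  exact add_le_add (sum_le_sum fun i _ => div_le_div_of_nonneg_left (sq_nonneg _)
    (by positivity) (sum_sq_selectedLowerRows_add_one_le G t ψ i)) le_rfl

theorem sum_quotCoords_vertexCols (K : ℝ) :
    ∑ p : V × Fin 3, (∑ i, quotCoords G t ψ (Sum.inl i) (Sum.inl p) ^ 2 / K +
        MG G t (Sum.inr (Sum.inr ())) (Sum.inl p) ^ 2) = 4 * Fintype.card V * (t ^ 6 / K) := by
  have hcol (w : V) : ∑ j, ∑ i, quotCoords G t ψ (Sum.inl i) (Sum.inl (w, j)) ^ 2 = 4 * t ^ 6 := by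
    simp only [quotCoords_vertex, sum_sq_ite_sub_ite, ← pow_mul]
  have hε (p : V × Fin 3) : MG G t (Sum.inr (Sum.inr ())) (Sum.inl p) = 0 := rfl
  simp only [hε, ne_eq, OfNat.ofNat_ne_zero, not_false_eq_true, zero_pow, add_zero, ← sum_div,
    Fintype.sum_prod_type, hcol, sum_const, card_univ, nsmul_eq_mul]
  ring

theorem le_sum_quotCoords_edgeCols (K : ℝ) (hK : 0 ≤ K) (hψ : ∃ u w : V, G.Adj u w ∧ ψ u = ψ w) :
    #G.edgeFinset * t ^ 2 + (#G.edgeFinset + 2) * (t ^ 10 / K) ≤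
      ∑ e : G.edgeSet, (∑ i, quotCoords G t ψ (Sum.inl i) (Sum.inr e) ^ 2 / K +
        MG G t (Sum.inr (Sum.inr ())) (Sum.inr e) ^ 2) := by
  obtain ⟨u₀, w₀, h₀, hψ₀⟩ := hψ
  set e₀ : G.edgeSet := ⟨s(u₀, w₀), G.mem_edgeSet.2 h₀⟩
  have hcol (e : G.edgeSet) :
      t ^ 10 + (if e = e₀ then 2 * t ^ 10 else 0) ≤
        ∑ i, quotCoords G t ψ (Sum.inl i) (Sum.inr e) ^ 2 := by
    obtain ⟨e, he⟩ := e
    induction e using Sym2.ind with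
    | _ u w =>
      have hmono : (⟨s(u, w), he⟩ : G.edgeSet) = e₀ → ψ u = ψ w := by
        intro h
        rcases Sym2.eq_iff.1 (congrArg Subtype.val h) with ⟨rfl, rfl⟩ | ⟨rfl, rfl⟩
        exacts [hψ₀, hψ₀.symm]
      have ht : 0 ≤ t ^ 10 := by positivity
      rw [sum_sq_quotCoords_edge G t ψ (G.mem_edgeSet.1 he)]
      split_ifs with h₁ h₂ <;> first | linarith | exact absurd (hmono h₁) h₂
  have hsum : (#G.edgeFinset + 2) * t ^ 10 ≤
      ∑ e : G.edgeSet, ∑ i, quotCoords G t ψ (Sum.inl i) (Sum.inr e) ^ 2 := by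
    calc (#G.edgeFinset + 2) * t ^ 10
        = ∑ e : G.edgeSet, (t ^ 10 + if e = e₀ then 2 * t ^ 10 else 0) := by
          rw [sum_add_distrib, sum_const, sum_ite_eq', card_univ, SimpleGraph.edgeFinset_card]
          simp only [mem_univ, if_true, nsmul_eq_mul]
          ring
      _ ≤ _ := sum_le_sum fun e _ => hcol e
  have hε (e : G.edgeSet) : MG G t (Sum.inr (Sum.inr ())) (Sum.inr e) = t := rfl
  have hdiv := div_le_div_of_nonneg_right hsum hK
  rw [mul_div_assoc] at hdiv
  simp only [hε, sum_add_distrib, ← sum_div, sum_const, card_univ, nsmul_eq_mul,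
    SimpleGraph.edgeFinset_card] at hdiv ⊢
  linarith

end ReductionMatrix

theorem non_coloring_squared_lower_bound_general
    {V : Type*} [Fintype V] [DecidableEq V] (G : SimpleGraph V) [DecidableRel G.Adj]
    (n m : ℕ) (hn : n = Fintype.card V) (hm : m = G.edgeFinset.card)
    (t : ℝ)
    (ψ : V → Fin 3) (hψ : ∃ u v : V, G.Adj u v ∧ ψ u = ψ v)
    (S : Matrix (V ⊕ Fin 3 ⊕ Unit) V ℝ)
    (hS : S = Matrix.of fun r (v : V) => MG G t r (Sum.inl (v, ψ v)))
    (A : Matrix V ((V × Fin 3) ⊕ G.edgeSet) ℝ) :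
    frob (MG G t - S * A) ^ 2 ≥
      m * t ^ 2 + 4 * n * (t ^ 3 / (1 + n * t ^ 6)) ^ 2 +
        (m + 2) * (t ^ 5 / (1 + n * t ^ 6)) ^ 2 := by
  subst hn hm hS
  set K : ℝ := 1 + Fintype.card V * t ^ 6
  have hK : 1 ≤ K := le_add_of_nonneg_right (by positivity)
  rw [of_MG_selected_eq_fromRows, ge_iff_le]
  calc _ ≤ #G.edgeFinset * t ^ 2 + 4 * Fintype.card V * (t ^ 6 / K) +
        (#G.edgeFinset + 2) * (t ^ 10 / K) := by
        gcongr
        · exact (div_sq_le_sq_div (t ^ 3) hK).trans_eq (by ring)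
        · exact (div_sq_le_sq_div (t ^ 5) hK).trans_eq (by ring)
    _ ≤ ∑ c, (∑ i, quotCoords G t ψ (Sum.inl i) c ^ 2 / K +
        MG G t (Sum.inr (Sum.inr ())) c ^ 2) := by
        rw [Fintype.sum_sum_type, sum_quotCoords_vertexCols]
        linarith [le_sum_quotCoords_edgeCols G t ψ K (by linarith) hψ]
    _ ≤ ∑ c, ∑ k, quotCoords G t ψ k c ^ 2 / (∑ v, selectedLowerRows G t ψ k v ^ 2 + 1) :=
        sum_le_sum fun c _ => sum_sq_quotCoords_div_le G t ψ c
    _ ≤ _ := sum_sq_div_le_frob_sq_sub_fromRows_mul _ _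
        (fun _ _ => selectedLowerRows_eq_zero G t ψ) _ _

/-- If `ψ : V → {1,2,3}` is not a three-coloring of `G` and `S` is the submatrix of `M(G)`
with columns indexed by `𝒱 = {(v, ψ(v)) : v ∈ V}`, then for every matrix `A` one has
`‖M(G) - S A‖² ≥ m t² + 4 n (t³/(1+n t⁶))² + (m+2) (t⁵/(1+n t⁶))²`. -/
theorem non_coloring_squared_lower_bound
    {V : Type*} [Fintype V] [DecidableEq V] (G : SimpleGraph V) [DecidableRel G.Adj]
    (n m : ℕ) (hn : n = Fintype.card V) (hm : m = G.edgeFinset.card)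
    (hn1 : 1 ≤ n) (hm1 : 1 ≤ m)
    (t : ℝ) (ht : t = 1 / (4 * (m + n) ^ 3))
    (ψ : V → Fin 3) (hψ : ∃ u v : V, G.Adj u v ∧ ψ u = ψ v)
    (S : Matrix (V ⊕ Fin 3 ⊕ Unit) V ℝ)
    (hS : S = Matrix.of fun r (v : V) => MG G t r (Sum.inl (v, ψ v)))
    (A : Matrix V ((V × Fin 3) ⊕ G.edgeSet) ℝ) :
    frob (MG G t - S * A) ^ 2 ≥
      m * t ^ 2 + 4 * n * (t ^ 3 / (1 + n * t ^ 6)) ^ 2 +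
        (m + 2) * (t ^ 5 / (1 + n * t ^ 6)) ^ 2 :=
  non_coloring_squared_lower_bound_general G n m hn hm t ψ hψ S hS A
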